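/- arXiv:1405.2714 — 2 statements merged into one kernel-verified Lean document; each statement's English description precedes it below -/
import Mathlib

section
/- Characterization of parallel equilibria: (i) if (𝐑, ξ) is a relative equilibrium pair of the second-order model with 𝐑 = R e_i for some R > 0 and some index i, and 𝐑·ξ ≠ 0, then ξ is a scalar multiple of e_i, R² = (9 I_i − 3)/2, and consequently I_i > 1/3 and R² < 3/4. (ii) Conversely, if I_i > 1/3 and R = √((9 I_i − 3)/2), then for every t ∈ ℝ the pair (R e_i, t e_i) is a relative equilibrium pair of the second-order model. -/
noncomputable section

open Real

/-- The Euclidean dot product on `ℝ³`. -/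
def dot3 (u v : Fin 3 → ℝ) : ℝ := u 0 * v 0 + u 1 * v 1 + u 2 * v 2

/-- The Euclidean norm on `ℝ³`. -/
def norm3 (u : Fin 3 → ℝ) : ℝ := Real.sqrt (dot3 u u)

/-- The `j`-th standard basis vector of `ℝ³`. -/
def e3 (j : Fin 3) : Fin 3 → ℝ := fun i => if i = j then 1 else 0

/-- The inertia tensor `diag (I₁, I₂, I₃)` applied to a vector. -/
def inertiaApply (I₁ I₂ I₃ : ℝ) (v : Fin 3 → ℝ) : Fin 3 → ℝ :=
  ![I₁ * v 0, I₂ * v 1, I₃ * v 2]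

/-- The gradient of the second-order gravitational potential:
`∇V₂(𝐑) = 𝐑/R³ + 3𝐑/(2R⁵) + 3𝐈𝐑/R⁵ − 15(𝐑·𝐈𝐑)𝐑/(2R⁷)` with `R = |𝐑|`. -/
def gradV2 (I₁ I₂ I₃ : ℝ) (R : Fin 3 → ℝ) : Fin 3 → ℝ :=
  fun i => R i / (norm3 R) ^ 3 + 3 * R i / (2 * (norm3 R) ^ 5)
    + 3 * (inertiaApply I₁ I₂ I₃ R) i / (norm3 R) ^ 5
    - 15 * (dot3 R (inertiaApply I₁ I₂ I₃ R)) * R i / (2 * (norm3 R) ^ 7)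

/-- `(𝐑, ξ)` is a relative equilibrium pair of the second-order model:
`𝐑 ≠ 0`, `(𝐈 − 𝐑𝐑ᵀ)ξ = αξ` for some `α`, and `∇V₂(𝐑) = −(𝐑·ξ)ξ + |ξ|²𝐑`. -/
def IsRelEq (I₁ I₂ I₃ : ℝ) (R ξ : Fin 3 → ℝ) : Prop :=
  R ≠ 0 ∧ ∃ α : ℝ,
    (∀ i, (inertiaApply I₁ I₂ I₃ ξ) i - (dot3 R ξ) * R i = α * ξ i) ∧
    (∀ i, gradV2 I₁ I₂ I₃ R i = -(dot3 R ξ) * ξ i + (dot3 ξ ξ) * R i)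

/-! On the axis `𝐑 = r eᵢ` the gradient is `∇V₂(𝐑) = ((2r² + 3 − 9Iᵢ)/(2r⁴)) eᵢ`. The components
`j ≠ i` of the equilibrium equation read `0 = −(𝐑·ξ) ξⱼ`, so `𝐑·ξ ≠ 0` forces `ξ ∥ eᵢ`; the
`i`-th component then has right-hand side `−r ξᵢ² + ξᵢ² r = 0`, so the coefficient vanishes:
`2r² + 3 = 9Iᵢ`. Conversely, for `ξ = t eᵢ` both sides of the equation vanish, and `ξ` is an
eigenvector of `𝐈 − 𝐑𝐑ᵀ` with eigenvalue `Iᵢ − r²`. -/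

lemma e3_apply (i j : Fin 3) : e3 i j = if j = i then 1 else 0 := rfl

lemma inertiaApply_apply (I₁ I₂ I₃ : ℝ) (v : Fin 3 → ℝ) (j : Fin 3) :
    inertiaApply I₁ I₂ I₃ v j = ![I₁, I₂, I₃] j * v j := by
  fin_cases j <;> rfl

lemma dot3_smul_e3 (i : Fin 3) (r : ℝ) (v : Fin 3 → ℝ) : dot3 (r • e3 i) v = r * v i := by
  fin_cases i <;> simp [dot3, e3]

lemma norm3_smul_e3 (i : Fin 3) {r : ℝ} (hr : 0 ≤ r) : norm3 (r • e3 i) = r := by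
  rw [norm3, dot3_smul_e3, Pi.smul_apply, e3_apply, if_pos rfl, smul_eq_mul, mul_one,
    Real.sqrt_mul_self hr]

lemma inertiaApply_smul_e3 (I₁ I₂ I₃ : ℝ) (i : Fin 3) (r : ℝ) :
    inertiaApply I₁ I₂ I₃ (r • e3 i) = (![I₁, I₂, I₃] i * r) • e3 i := by
  ext j
  rw [inertiaApply_apply]
  by_cases hji : j = i
  · subst hji; simp [e3]
  · simp [e3, hji]

lemma gradV2_smul_e3 (I₁ I₂ I₃ : ℝ) (i : Fin 3) {r : ℝ} (hr : 0 < r) :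
    gradV2 I₁ I₂ I₃ (r • e3 i) = ((2 * r ^ 2 + 3 - 9 * ![I₁, I₂, I₃] i) / (2 * r ^ 4)) • e3 i := by
  ext j
  simp only [gradV2, norm3_smul_e3 i hr.le, inertiaApply_smul_e3, dot3_smul_e3, Pi.smul_apply,
    smul_eq_mul, e3_apply]
  split_ifs <;> field_simp <;> ring

section Equilibria

variable {I₁ I₂ I₃ : ℝ} {i : Fin 3} {r : ℝ} {ξ : Fin 3 → ℝ}

lemma IsRelEq.eq_smul_e3 (hr : 0 < r) (h : IsRelEq I₁ I₂ I₃ (r • e3 i) ξ) (hξ : ξ i ≠ 0) :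
    ξ = ξ i • e3 i := by
  obtain ⟨-, -, -, hgrad⟩ := h
  ext j
  by_cases hji : j = i
  · subst hji; simp [e3]
  · have hj := hgrad j
    simp only [gradV2_smul_e3 I₁ I₂ I₃ i hr, dot3_smul_e3, Pi.smul_apply, smul_eq_mul, e3_apply,
      if_neg hji, mul_zero] at hj
    have : r * ξ i * ξ j = 0 := by linarith
    simpa [e3_apply, hji, hr.ne', hξ] using this

lemma IsRelEq.radius_sq (hr : 0 < r) (h : IsRelEq I₁ I₂ I₃ (r • e3 i) ξ) (hξ : ξ i ≠ 0) :
    2 * r ^ 2 + 3 = 9 * ![I₁, I₂, I₃] i := by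
  have hξ_eq := h.eq_smul_e3 hr hξ
  obtain ⟨-, -, -, hgrad⟩ := h
  have hi := hgrad i
  rw [gradV2_smul_e3 I₁ I₂ I₃ i hr, hξ_eq] at hi
  simp only [dot3_smul_e3, Pi.smul_apply, smul_eq_mul, e3_apply, ↓reduceIte, mul_one] at hi
  have hcoef : (2 * r ^ 2 + 3 - 9 * ![I₁, I₂, I₃] i) / (2 * r ^ 4) = 0 := by
    rw [hi]; ring
  rcases div_eq_zero_iff.mp hcoef with hc | hc
  · linarith
  · exact absurd hc (by positivity)

lemma isRelEq_smul_e3 (hr : 0 < r) (hrad : 2 * r ^ 2 + 3 = 9 * ![I₁, I₂, I₃] i) (t : ℝ) :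
    IsRelEq I₁ I₂ I₃ (r • e3 i) (t • e3 i) := by
  refine ⟨fun h => by simpa [e3, hr.ne'] using congrFun h i, ![I₁, I₂, I₃] i - r ^ 2,
    fun j => ?_, fun j => ?_⟩
  · rw [inertiaApply_smul_e3, dot3_smul_e3]
    simp only [Pi.smul_apply, smul_eq_mul, e3_apply]
    split_ifs <;> ring
  · rw [gradV2_smul_e3 I₁ I₂ I₃ i hr, hrad]
    simp only [dot3_smul_e3, Pi.smul_apply, smul_eq_mul, e3_apply]
    ring

end Equilibria

theorem stmt2_general (I₁ I₂ I₃ : ℝ)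
    (hI₁' : I₁ < 1 / 2)
    (hI₂' : I₂ < 1 / 2)
    (hI₃' : I₃ < 1 / 2) :
    (∀ (i : Fin 3) (r : ℝ) (ξ : Fin 3 → ℝ), 0 < r →
      IsRelEq I₁ I₂ I₃ (r • e3 i) ξ → dot3 (r • e3 i) ξ ≠ 0 →
      (∃ t : ℝ, ξ = t • e3 i) ∧ r ^ 2 = (9 * ![I₁, I₂, I₃] i - 3) / 2 ∧
        ![I₁, I₂, I₃] i > 1 / 3 ∧ r ^ 2 < 3 / 4) ∧
    (∀ i : Fin 3, ![I₁, I₂, I₃] i > 1 / 3 → ∀ t : ℝ,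
      IsRelEq I₁ I₂ I₃ ((Real.sqrt ((9 * ![I₁, I₂, I₃] i - 3) / 2)) • e3 i) (t • e3 i)) := by
  have hsmall : ∀ i, ![I₁, I₂, I₃] i < 1 / 2 := by
    intro i; fin_cases i <;> assumption
  refine ⟨fun i r ξ hr h hdot => ?_, fun i hi t => ?_⟩
  · have hξ : ξ i ≠ 0 := by
      rw [dot3_smul_e3] at hdot
      exact right_ne_zero_of_mul hdot
    have hrad := h.radius_sq hr hξ
    have hIi := hsmall i
    have hr2 := pow_pos hr 2
    exact ⟨⟨ξ i, h.eq_smul_e3 hr hξ⟩, by linarith, by linarith, by linarith⟩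
  · have hpos : 0 < (9 * ![I₁, I₂, I₃] i - 3) / 2 := by linarith
    refine isRelEq_smul_e3 (Real.sqrt_pos.mpr hpos) ?_ t
    rw [Real.sq_sqrt hpos.le]
    ring

theorem stmt2 (I₁ I₂ I₃ : ℝ)
    (hI₁ : 0 < I₁) (hI₁' : I₁ < 1 / 2)
    (hI₂ : 0 < I₂) (hI₂' : I₂ < 1 / 2)
    (hI₃ : 0 < I₃) (hI₃' : I₃ < 1 / 2)
    (hsum : I₁ + I₂ + I₃ = 1) :
    (∀ (i : Fin 3) (r : ℝ) (ξ : Fin 3 → ℝ), 0 < r →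
      IsRelEq I₁ I₂ I₃ (r • e3 i) ξ → dot3 (r • e3 i) ξ ≠ 0 →
      (∃ t : ℝ, ξ = t • e3 i) ∧ r ^ 2 = (9 * ![I₁, I₂, I₃] i - 3) / 2 ∧
        ![I₁, I₂, I₃] i > 1 / 3 ∧ r ^ 2 < 3 / 4) ∧
    (∀ i : Fin 3, ![I₁, I₂, I₃] i > 1 / 3 → ∀ t : ℝ,
      IsRelEq I₁ I₂ I₃ ((Real.sqrt ((9 * ![I₁, I₂, I₃] i - 3) / 2)) • e3 i) (t • e3 i)) :=
  stmt2_general I₁ I₂ I₃ hI₁' hI₂' hI₃'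
end
end

section
/- If (𝐑, ξ) is a relative equilibrium pair of the second-order model in which ξ is not a scalar multiple of 𝐑, then ∇V₂(𝐑)·𝐑 > 0; equivalently, 1 + 3/(2R²) − 9(𝐑·𝐈𝐑)/(2R⁴) > 0, where R = |𝐑|. -/
noncomputable section

open Real

/-! Dotting the force balance `∇V₂(𝐑) = −(𝐑·ξ)ξ + |ξ|²𝐑` with `𝐑` gives
`∇V₂(𝐑)·𝐑 = |ξ|²R² − (𝐑·ξ)²`, which is positive by the strict Cauchy–Schwarz inequality
because `ξ` is not parallel to `𝐑`. On the other hand, directly from the formula for `∇V₂`,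
`∇V₂(𝐑)·𝐑 = (1 + 3/(2R²) − 9(𝐑·𝐈𝐑)/(2R⁴)) / R`. -/

open Matrix

lemma dot3_eq_dotProduct (u v : Fin 3 → ℝ) : dot3 u v = u ⬝ᵥ v := by
  simp [dot3, dotProduct, Fin.sum_univ_three]

lemma dot3_self_nonneg (u : Fin 3 → ℝ) : 0 ≤ dot3 u u := by
  rw [dot3_eq_dotProduct]
  exact Finset.sum_nonneg fun i _ => mul_self_nonneg (u i)

lemma dot3_self_pos {u : Fin 3 → ℝ} (hu : u ≠ 0) : 0 < dot3 u u :=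
  (dot3_self_nonneg u).lt_of_ne' (by rwa [dot3_eq_dotProduct, Ne, dotProduct_self_eq_zero])

lemma norm3_pos {u : Fin 3 → ℝ} (hu : u ≠ 0) : 0 < norm3 u :=
  Real.sqrt_pos.2 (dot3_self_pos hu)

lemma norm3_sq (u : Fin 3 → ℝ) : norm3 u ^ 2 = dot3 u u :=
  Real.sq_sqrt (dot3_self_nonneg u)

/-- Lagrange's identity `|u|²|v|² − (u·v)² = |u × v|²` makes Cauchy–Schwarz strict off the
line through `u`. -/
lemma dot3_sq_lt_of_not_parallel {u v : Fin 3 → ℝ} (hu : u ≠ 0) (huv : ¬ ∃ c : ℝ, v = c • u) :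
    dot3 u v ^ 2 < dot3 v v * dot3 u u := by
  have hcross : u ⨯₃ v ≠ 0 := by
    rw [crossProduct_ne_zero_iff_linearIndependent, LinearIndependent.pair_iff' hu]
    exact fun c hc => huv ⟨c, hc.symm⟩
  have hlagrange : dot3 (u ⨯₃ v) (u ⨯₃ v) = dot3 v v * dot3 u u - dot3 u v ^ 2 := by
    simp only [dot3_eq_dotProduct, cross_dot_cross, dotProduct_comm v u]
    ring
  linarith [hlagrange ▸ dot3_self_pos hcross]

lemma dot3_gradV2_self (I₁ I₂ I₃ : ℝ) (R : Fin 3 → ℝ) :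
    dot3 (gradV2 I₁ I₂ I₃ R) R = (1 + 3 / (2 * norm3 R ^ 2)
      - 9 * dot3 R (inertiaApply I₁ I₂ I₃ R) / (2 * norm3 R ^ 4)) / norm3 R := by
  rcases eq_or_ne R 0 with rfl | hR
  · simp [dot3, norm3]
  set S := dot3 R (inertiaApply I₁ I₂ I₃ R)
  have hexpand : dot3 (gradV2 I₁ I₂ I₃ R) R = dot3 R R / norm3 R ^ 3
      + 3 * dot3 R R / (2 * norm3 R ^ 5) + 3 * S / norm3 R ^ 5
      - 15 * S * dot3 R R / (2 * norm3 R ^ 7) := by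
    simp only [S, dot3, gradV2]
    ring
  have hr := (norm3_pos hR).ne'
  rw [hexpand, ← norm3_sq]
  field_simp
  ring

lemma dot3_gradV2_self_of_balance {I₁ I₂ I₃ : ℝ} {R ξ : Fin 3 → ℝ}
    (hbal : ∀ i, gradV2 I₁ I₂ I₃ R i = -(dot3 R ξ) * ξ i + (dot3 ξ ξ) * R i) :
    dot3 (gradV2 I₁ I₂ I₃ R) R = dot3 ξ ξ * dot3 R R - dot3 R ξ ^ 2 := by
  simp only [dot3, hbal]
  ring

theorem stmt5_general (I₁ I₂ I₃ : ℝ)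
    (R ξ : Fin 3 → ℝ)
    (hre : IsRelEq I₁ I₂ I₃ R ξ)
    (hnp : ¬ ∃ c : ℝ, ξ = c • R) :
    dot3 (gradV2 I₁ I₂ I₃ R) R > 0 ∧
    1 + 3 / (2 * (norm3 R) ^ 2)
      - 9 * dot3 R (inertiaApply I₁ I₂ I₃ R) / (2 * (norm3 R) ^ 4) > 0 := by
  obtain ⟨hR, -, -, hbalance⟩ := hre
  have hpos : 0 < dot3 (gradV2 I₁ I₂ I₃ R) R := by
    rw [dot3_gradV2_self_of_balance hbalance]
    exact sub_pos.2 (dot3_sq_lt_of_not_parallel hR hnp)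
  refine ⟨hpos, ?_⟩
  rw [dot3_gradV2_self] at hpos
  exact (div_pos_iff_of_pos_right (norm3_pos hR)).1 hpos

theorem stmt5 (I₁ I₂ I₃ : ℝ)
    (hI₁ : 0 < I₁) (hI₁' : I₁ < 1 / 2)
    (hI₂ : 0 < I₂) (hI₂' : I₂ < 1 / 2)
    (hI₃ : 0 < I₃) (hI₃' : I₃ < 1 / 2)
    (hsum : I₁ + I₂ + I₃ = 1)
    (R ξ : Fin 3 → ℝ)
    (hre : IsRelEq I₁ I₂ I₃ R ξ)
    (hnp : ¬ ∃ c : ℝ, ξ = c • R) :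
    dot3 (gradV2 I₁ I₂ I₃ R) R > 0 ∧
    1 + 3 / (2 * (norm3 R) ^ 2)
      - 9 * dot3 R (inertiaApply I₁ I₂ I₃ R) / (2 * (norm3 R) ^ 4) > 0 :=
  stmt5_general I₁ I₂ I₃ R ξ hre hnp
end
end
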